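/- Let k ≥ 2 and n ≥ 4 be integers and let G_{k,n} be the graph described in the context. Then for every choice of vertices x_i ∈ {z_{i,1}, z_{i,2}} for i = 1,…,k−1, the set {u, x_1,…,x_{k−1}} is a total dominating set of G_{k,n}. -/

import Mathlib

/-- Vertices of `G_{k,n}`: the clique vertices `y_j` (`Sum.inl`), the vertices
`z_{i,j}` (`Sum.inr (Sum.inl (i,j))`, 0-indexed), and the vertex
`u = Sum.inr (Sum.inr ())`. -/
abbrev GknV (k n : ℕ) := Fin n ⊕ ((Fin (k - 1) × Fin n) ⊕ Unit)

/-- Edge relation of `G_{k,n}`: the `y`'s form a `K_n`; for each `i` the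
`z_{i,·}`'s form a `K_n` minus the edge `z_{i,1} z_{i,2}` (0-indexed: second
coordinates `0` and `1`); `u` is adjacent to every `y_j` and to `z_{i,1}`,
`z_{i,2}` for every `i`. -/
def GknRel (k n : ℕ) : GknV k n → GknV k n → Prop
  | .inl _, .inl _ => True
  | .inr (.inl p), .inr (.inl q) =>
      p.1 = q.1 ∧ ¬((p.2.val = 0 ∧ q.2.val = 1) ∨ (p.2.val = 1 ∧ q.2.val = 0))
  | .inr (.inr _), .inl _ => True
  | .inr (.inr _), .inr (.inl p) => p.2.val = 0 ∨ p.2.val = 1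
  | _, _ => False

/-- The graph `G_{k,n}`. -/
def Gkn (k n : ℕ) : SimpleGraph (GknV k n) := SimpleGraph.fromRel (GknRel k n)

/-- `D` is a total dominating set of `G`. -/
def IsTotalDomSet {V : Type*} (G : SimpleGraph V) (D : Finset V) : Prop :=
  ∀ v : V, ∃ d ∈ D, G.Adj v d

/-! `u` dominates every `y_j` and the two vertices `z_{i,1}, z_{i,2}` of each block, and the chosen
`x_i ∈ {z_{i,1}, z_{i,2}}` dominates `u` (this needs a block, i.e. `k ≥ 2`) as well as every other
`z_{i,j}` with `j ∉ {1, 2}`, since the only non-edge inside a block is `z_{i,1} z_{i,2}`. -/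

section Gkn

variable {k n : ℕ}

theorem Gkn_adj_y_u (j : Fin n) : (Gkn k n).Adj (.inl j) (.inr (.inr ())) := by
  rw [Gkn, SimpleGraph.fromRel_adj]
  exact ⟨by simp, Or.inr trivial⟩

theorem Gkn_adj_z_u {p : Fin (k - 1) × Fin n} (hp : p.2.val = 0 ∨ p.2.val = 1) :
    (Gkn k n).Adj (.inr (.inl p)) (.inr (.inr ())) := by
  rw [Gkn, SimpleGraph.fromRel_adj]
  exact ⟨by simp, Or.inr hp⟩

theorem Gkn_adj_z_z {i : Fin (k - 1)} {j j' : Fin n} (hj : ¬(j.val = 0 ∨ j.val = 1))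
    (hjj' : j ≠ j') : (Gkn k n).Adj (.inr (.inl (i, j))) (.inr (.inl (i, j'))) := by
  rw [Gkn, SimpleGraph.fromRel_adj]
  refine ⟨by simpa using hjj', Or.inl ⟨rfl, ?_⟩⟩
  show ¬((j.val = 0 ∧ j'.val = 1) ∨ (j.val = 1 ∧ j'.val = 0))
  omega

end Gkn

theorem stmt4_general (k n : ℕ) (hk : 2 ≤ k)
    (c : Fin (k - 1) → Fin n) (hc : ∀ i, (c i).val = 0 ∨ (c i).val = 1) :
    IsTotalDomSet (Gkn k n)
      (insert (Sum.inr (Sum.inr ()))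
        (Finset.image (fun i => Sum.inr (Sum.inl (i, c i))) Finset.univ)) := by
  have hx : ∀ i, (Sum.inr (Sum.inl (i, c i)) : GknV k n) ∈ insert (Sum.inr (Sum.inr ()))
      (Finset.image (fun i => Sum.inr (Sum.inl (i, c i))) Finset.univ) := fun i =>
    Finset.mem_insert_of_mem (Finset.mem_image_of_mem _ (Finset.mem_univ i))
  rintro (j | ⟨i, j⟩ | ⟨⟩)
  · exact ⟨_, Finset.mem_insert_self _ _, Gkn_adj_y_u j⟩
  · by_cases hj : j.val = 0 ∨ j.val = 1
    · exact ⟨_, Finset.mem_insert_self _ _, Gkn_adj_z_u hj⟩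
    · have hne : j ≠ c i := fun h => hj (h ▸ hc i)
      exact ⟨_, hx i, Gkn_adj_z_z hj hne⟩
  · let i₀ : Fin (k - 1) := ⟨0, by omega⟩
    exact ⟨_, hx i₀, (Gkn_adj_z_u (hc i₀)).symm⟩

/-- For every choice `x_i ∈ {z_{i,1}, z_{i,2}}`, the set `{u, x_1, …, x_{k-1}}`
is a total dominating set of `G_{k,n}`. -/
theorem stmt4 (k n : ℕ) (hk : 2 ≤ k) (hn : 4 ≤ n)
    (c : Fin (k - 1) → Fin n) (hc : ∀ i, (c i).val = 0 ∨ (c i).val = 1) :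
    IsTotalDomSet (Gkn k n)
      (insert (Sum.inr (Sum.inr ()))
        (Finset.image (fun i => Sum.inr (Sum.inl (i, c i))) Finset.univ)) :=
  stmt4_general k n hk c hc
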